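/- If (b_0, …, b_m) is a strictly descending sequence in B_3^+ (b_0 > b_1 > ⋯ > b_m in the braid order) such that ‖b_t‖ ≤ k holds for every t ≤ m, then m < 2^{3k+1}. -/

import Mathlib

/-!
The entries of a strictly descending sequence are pairwise distinct, because the braid order is
transitive and irreflexive; irreflexivity is Property A, no σ-positive word represents `1`.
Such a word either consists of positive σ1's only, and then has positive exponent sum, or
contains σ2 only positively; then, in the Artin action on `F₃ = ⟨x₀, x₁, x₂⟩` (strands numbered
so that σ1 fixes `x₀`), it sends `x₀` to an element whose reduced word has the form
`x₀ ⋯ x₀⁻¹`. This shape is preserved by the automorphisms of σ1, σ1⁻¹ and σ2, which is checked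
by a finite certificate: for each letter `y`, the possible beginnings of the reduced image of
a reduced word starting with `y`, closed under applying the automorphism to one more letter.

On the other hand `‖b‖ ≤ k` means `b ∣ Δ^k`, and since the relation of `B₃⁺` preserves word
length, every word for `b` then has length at most `3k`; there are fewer than `2^(3k+1)` words
of length at most `3k` on two letters.
-/

namespace Braid3

/-! ### The positive 3-strand braid monoid
presented by σ1, σ2 (letters `0`, `1` of `Fin 2`) with the relation σ1σ2σ1 = σ2σ1σ2. -/

def braidRel : FreeMonoid (Fin 2) → FreeMonoid (Fin 2) → Prop := fun u v =>
  u = FreeMonoid.of 0 * FreeMonoid.of 1 * FreeMonoid.of 0 ∧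
  v = FreeMonoid.of 1 * FreeMonoid.of 0 * FreeMonoid.of 1

def braidCon : Con (FreeMonoid (Fin 2)) := conGen braidRel

/-- The positive 3-strand braid monoid `B₃⁺`. -/
abbrev B3P := braidCon.Quotient

/-- The element of `B₃⁺` represented by a word on the alphabet {σ1, σ2}. -/
def mkw (w : List (Fin 2)) : B3P := braidCon.mk' (FreeMonoid.ofList w)

/-- σ1 as an element of B₃⁺. -/
def s1 : B3P := mkw [0]
/-- σ2 as an element of B₃⁺. -/
def s2 : B3P := mkw [1]
/-- Garside's fundamental braid Δ₃ = σ1σ2σ1. -/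
def Δ : B3P := mkw [0, 1, 0]

/-! ### The 3-strand braid group B₃, with the same presentation. -/

def grpRels : Set (FreeGroup (Fin 2)) :=
  { FreeGroup.of 0 * FreeGroup.of 1 * FreeGroup.of 0 *
    (FreeGroup.of 1 * FreeGroup.of 0 * FreeGroup.of 1)⁻¹ }

abbrev B3 := PresentedGroup grpRels

def g (i : Fin 2) : B3 := PresentedGroup.of i

theorem grp_braid_rel : g 0 * g 1 * g 0 = g 1 * g 0 * g 1 := by
  show (QuotientGroup.mk (FreeGroup.of 0 * FreeGroup.of 1 * FreeGroup.of 0) : B3)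
      = QuotientGroup.mk (FreeGroup.of 1 * FreeGroup.of 0 * FreeGroup.of 1)
  rw [QuotientGroup.eq]
  have h : (FreeGroup.of 0 * FreeGroup.of 1 * FreeGroup.of 0 *
      (FreeGroup.of 1 * FreeGroup.of 0 * FreeGroup.of 1)⁻¹ : FreeGroup (Fin 2)) ∈
      Subgroup.normalClosure grpRels :=
    Subgroup.subset_normalClosure rfl
  have h2 := (Subgroup.normalClosure_normal (s := grpRels)).conj_mem _ h
      (FreeGroup.of 0 * FreeGroup.of 1 * FreeGroup.of 0)⁻¹
  simp only [inv_inv] at h2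
  have h3 : ((FreeGroup.of 0 * FreeGroup.of 1 * FreeGroup.of 0 : FreeGroup (Fin 2)))⁻¹ *
      (FreeGroup.of 0 * FreeGroup.of 1 * FreeGroup.of 0 *
        (FreeGroup.of 1 * FreeGroup.of 0 * FreeGroup.of 1)⁻¹) *
      (FreeGroup.of 0 * FreeGroup.of 1 * FreeGroup.of 0) =
      ((FreeGroup.of 0 * FreeGroup.of 1 * FreeGroup.of 0 : FreeGroup (Fin 2))⁻¹ *
        (FreeGroup.of 1 * FreeGroup.of 0 * FreeGroup.of 1))⁻¹ := by
    group
  rw [h3] at h2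
  exact (Subgroup.inv_mem_iff _).mp h2

/-- The canonical embedding of B₃⁺ into B₃. -/
def ι : B3P →* B3 :=
  Con.lift _ (FreeMonoid.lift fun i => g i) (by
    apply Con.conGen_le.mpr
    rintro u v ⟨hu, hv⟩
    subst hu; subst hv
    rw [Con.ker_rel]
    simp only [map_mul, FreeMonoid.lift_eval_of]
    exact grp_braid_rel)

/-! ### The braid order -/

/-- Evaluation in B₃ of a word on the letters σ1^{±1}, σ2^{±1}
(a letter `(i, true)` is σ_{i+1}, a letter `(i, false)` is σ_{i+1}⁻¹). -/
def evalSW (w : List (Fin 2 × Bool)) : B3 :=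
  (w.map fun l => if l.2 then g l.1 else (g l.1)⁻¹).prod

/-- A signed word is σ-positive if the generator of highest occurring index occurs,
and occurs only positively. -/
def SigmaPos (w : List (Fin 2 × Bool)) : Prop :=
  ∃ i : Fin 2, (i, true) ∈ w ∧ (i, false) ∉ w ∧ ∀ l ∈ w, l.1 ≤ i

/-- The braid order on the group B₃. -/
def gLt (a b : B3) : Prop := ∃ w, SigmaPos w ∧ evalSW w = a⁻¹ * b

/-- The braid order on B₃⁺. -/
def blt (a b : B3P) : Prop := gLt (ι a) (ι b)

def ble (a b : B3P) : Prop := blt a b ∨ a = b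

/-! ### ϕ-normal words and exponent sequences -/

/-- The minimal legal sizes e_k^min. -/
def emin : ℕ → ℕ
  | 1 => 0
  | 2 => 1
  | _ => 2

/-- The letter of the k-th block (1-based, from the right): σ1 for odd k, σ2 for even k. -/
def letterOf (k : ℕ) : Fin 2 := if k % 2 = 1 then 0 else 1

/-- The word σ_{[p]}^{e_p} ⋯ σ2^{e_2} σ1^{e_1} associated with the exponent
sequence `E = [e_p, …, e_1]`. -/
def wordOfExpSeq : List ℕ → List (Fin 2)
  | [] => []
  | e :: rest => List.replicate e (letterOf (rest.length + 1)) ++ wordOfExpSeq rest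

/-- `expAt E k` is e_k, the k-th entry of the exponent sequence counted from the right,
1-based. -/
def expAt (E : List ℕ) (k : ℕ) : ℕ := E.getD (E.length - k) 0

/-- `E = [e_p, …, e_1]` is the exponent sequence of a ϕ-normal word: the final block
decomposition is minimal (leading exponent nonzero) and e_k ≥ e_k^min for k < p. -/
def IsNormalSeq (E : List ℕ) : Prop :=
  E ≠ [] ∧ 1 ≤ expAt E E.length ∧ ∀ k, 1 ≤ k → k < E.length → emin k ≤ expAt E k

/-- A word on {σ1, σ2} is ϕ-normal if its (minimal) block decomposition
σ_{[p]}^{e_p} ⋯ σ2^{e_2} σ1^{e_1} satisfies e_k ≥ e_k^min for k < p. -/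
def IsPhiNormalWord (w : List (Fin 2)) : Prop :=
  ∃ E, IsNormalSeq E ∧ w = wordOfExpSeq E

/-- `E` is the exponent sequence of the braid `b`. -/
def HasExpSeq (b : B3P) (E : List ℕ) : Prop :=
  IsNormalSeq E ∧ mkw (wordOfExpSeq E) = b

/-- The exponent sequence of a (nontrivial) braid of B₃⁺. -/
noncomputable def expSeqOf (b : B3P) : List ℕ := by
  classical exact if h : ∃ E, HasExpSeq b E then h.choose else []

/-- The critical position of an exponent sequence: the least r < p with e_r > e_r^min
if it exists, and p otherwise. -/
noncomputable def critPos (E : List ℕ) : ℕ := by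
  classical exact
    if h : ∃ r, 1 ≤ r ∧ r < E.length ∧ emin r < expAt E r then Nat.find h else E.length

/-- The effect of the operation b ↦ b{t} on exponent sequences: remove one letter from
the critical block, and add t letters to the next block if the latter exists. -/
noncomputable def stepSeq (E : List ℕ) (t : ℕ) : List ℕ :=
  let p := E.length
  let r := critPos E
  let E1 := E.set (p - r) (expAt E r - 1)
  if 2 ≤ r then E1.set (p - (r - 1)) (expAt E (r - 1) + t) else E1

/-- The operation b ↦ b{t} of Definition 2.2 (with 1{t} = 1). -/
noncomputable def step (b : B3P) (t : ℕ) : B3P := by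
  classical exact if b = 1 then 1 else mkw (wordOfExpSeq (stepSeq (expSeqOf b) t))

/-- The G₃-sequence from b: `gseq b 0 = b`, `gseq b t = (gseq b (t-1)){t}`. -/
noncomputable def gseq (b : B3P) : ℕ → B3P
  | 0 => b
  | t + 1 => step (gseq b t) (t + 1)

/-- T(b): the length of the G₃-sequence from b, i.e. the least t with b{1}{2}⋯{t} = 1. -/
noncomputable def T (b : B3P) : ℕ := sInf {t | gseq b t = 1}

/-! ### The ordinal of a 3-braid, fundamental sequences, the Hardy hierarchy -/

open Ordinal in
/-- Sum Σ ω^{k-1}·(e_k − e_k^min) over the tail of an exponent sequence. -/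
noncomputable def ordSeqAux : List ℕ → Ordinal
  | [] => 0
  | e :: rest =>
    omega0 ^ (rest.length : Ordinal) * ((e - emin (rest.length + 1) : ℕ) : Ordinal)
      + ordSeqAux rest

open Ordinal in
/-- ord of an exponent sequence (e_p, …, e_1):
ω^{p−1}·e_p + Σ_{p>k≥1} ω^{k−1}·(e_k − e_k^min). -/
noncomputable def ordSeq : List ℕ → Ordinal
  | [] => 0
  | e :: rest => omega0 ^ (rest.length : Ordinal) * (e : Ordinal) + ordSeqAux rest

/-- The ordinal ord(b) < ω^ω attached to a braid of B₃⁺ (with ord(1) = 0). -/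
noncomputable def ordOf (b : B3P) : Ordinal := ordSeq (expSeqOf b)

open Ordinal in
/-- Fundamental sequences: 0[x] = 0, (α+1)[x] = α, (γ + ω^{r+1})[x] = γ + ω^r·x
(CNF decomposition), and (ω^ω)[x] = ω^x. -/
noncomputable def fundSeq (α : Ordinal) (x : ℕ) : Ordinal :=
  open scoped Classical in
  if α = 0 then 0
  else if h : ∃ β, α = β + 1 then h.choose
  else if α = omega0 ^ omega0 then omega0 ^ (x : Ordinal)
  else if h : ∃ p : Ordinal × ℕ, α = p.1 + omega0 ^ ((p.2 : Ordinal) + 1) ∧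
      omega0 ^ ((p.2 : Ordinal) + 1) ∣ p.1
    then h.choose.1 + omega0 ^ (h.choose.2 : Ordinal) * (x : Ordinal)
  else 0

open Ordinal in
theorem fundSeq_lt (α : Ordinal) (x : ℕ) (h0 : ¬α = 0) (hs : ¬∃ β, α = β + 1) :
    fundSeq α x < α := by
  classical
  rw [fundSeq]
  rw [if_neg h0, dif_neg hs]
  by_cases hw : α = omega0 ^ omega0
  · rw [if_pos hw, hw]
    exact (Ordinal.opow_lt_opow_iff_right Ordinal.one_lt_omega0).mpr (Ordinal.nat_lt_omega0 x)
  · rw [if_neg hw]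
    by_cases hd : ∃ p : Ordinal × ℕ, α = p.1 + omega0 ^ ((p.2 : Ordinal) + 1) ∧
        omega0 ^ ((p.2 : Ordinal) + 1) ∣ p.1
    · rw [dif_pos hd]
      obtain ⟨hα, -⟩ := hd.choose_spec
      have hlt : omega0 ^ ((hd.choose.2 : Ordinal)) * (x : Ordinal)
          < omega0 ^ ((hd.choose.2 : Ordinal) + 1) := by
        rw [Ordinal.add_one_eq_succ, Ordinal.opow_succ]
        exact (mul_lt_mul_iff_right₀
          (Ordinal.opow_pos _ Ordinal.omega0_pos)).mpr (Ordinal.nat_lt_omega0 x)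
      calc hd.choose.1 + omega0 ^ (hd.choose.2 : Ordinal) * (x : Ordinal)
          < hd.choose.1 + omega0 ^ ((hd.choose.2 : Ordinal) + 1) :=
            (add_lt_add_iff_left _).mpr hlt
        _ = α := hα.symm
    · rw [dif_neg hd]
      exact pos_iff_ne_zero.mpr h0

open Ordinal in
open scoped Classical in
/-- The Hardy hierarchy: H_0(x) = x, H_{α+1}(x) = H_α(x+1), H_λ(x) = H_{λ[x]}(x+1). -/
noncomputable def hardy (α : Ordinal) (x : ℕ) : ℕ :=
  if α = 0 then x
  else if h : ∃ β, α = β + 1 then hardy h.choose (x + 1)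
  else hardy (fundSeq α x) (x + 1)
termination_by α
decreasing_by
  · have hs := h.choose_spec
    have h2 : h.choose < h.choose + 1 := by
      rw [Ordinal.add_one_eq_succ]; exact Order.lt_succ _
    exact lt_of_lt_of_eq h2 hs.symm
  · exact fundSeq_lt _ _ (by assumption) (by assumption)

/-! ### Garside complexity -/

/-- The Garside complexity ‖b‖: the least ℓ such that b left-divides Δ₃^ℓ. -/
noncomputable def compl (b : B3P) : ℕ := sInf {ℓ | ∃ c, b * c = Δ ^ ℓ}

end Braid3

lemma Set.injOn_Iic_of_forall_rel_succ {β : Type*} (r : β → β → Prop) [IsTrans β r]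
    [Std.Irrefl r] {f : ℕ → β} {m : ℕ} (h : ∀ n < m, r (f (n + 1)) (f n)) :
    Set.InjOn f (Set.Iic m) := by
  have hrel : ∀ a b, a < b → b ≤ m → r (f b) (f a) := by
    intro a b hab
    induction b, hab using Nat.le_induction with
    | base => exact h a
    | succ b hab ih => exact fun hbm => _root_.trans (h b (by omega)) (ih (by omega))
  intro a ha b hb hfab
  by_contra hne
  rcases Nat.lt_or_gt_of_ne hne with hlt | hlt
  · exact irrefl_of r (f a) (hfab ▸ hrel a b hlt hb)
  · exact irrefl_of r (f b) (hfab ▸ hrel b a hlt ha)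

lemma Finset.card_le_two_pow_of_injOn {ι : Type*} (s : Finset ι) (w : ι → List (Fin 2)) {n : ℕ}
    (hw : Set.InjOn w s) (hlen : ∀ i ∈ s, (w i).length ≤ n) : s.card ≤ 2 ^ (n + 1) := by
  -- binary expansion with a leading digit `1`, so that trailing zeros are not lost
  let code : List (Fin 2) → ℕ := fun v => Nat.ofDigits 2 (v.map (↑) ++ [1])
  have hdigits (v : List (Fin 2)) : ∀ d ∈ v.map (↑) ++ [1], d < 2 := by
    intro d hd
    rcases List.mem_append.mp hd with hd | hd
    · obtain ⟨a, -, rfl⟩ := List.mem_map.mp hd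
      exact a.isLt
    · rw [List.mem_singleton.mp hd]
      exact one_lt_two
  have hcode : Function.Injective code := by
    intro v v' hvv'
    have := congrArg (Nat.digits 2) hvv'
    rw [Nat.digits_ofDigits _ one_lt_two _ (hdigits v) (by simp),
      Nat.digits_ofDigits _ one_lt_two _ (hdigits v') (by simp)] at this
    exact List.map_injective_iff.mpr Fin.val_injective (List.append_cancel_right this)
  have hlt (i) (hi : i ∈ s) : code (w i) < 2 ^ (n + 1) :=
    (Nat.ofDigits_lt_base_pow_length one_lt_two (hdigits _)).trans_le
      (Nat.pow_le_pow_right two_pos (by simpa using hlen i hi))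
  simpa using Finset.card_le_card_of_injOn (code ∘ w) (t := Finset.range (2 ^ (n + 1)))
    (fun i hi => Finset.mem_range.mpr (hlt i hi)) (hcode.comp_injOn hw)

/-! ### Substitutions of free groups certified by prefix patterns -/

namespace FreeGroup

section

variable {α : Type*}

def invLetter (x : α × Bool) : α × Bool := (x.1, !x.2)

lemma ne_invLetter_of_isReduced {x y : α × Bool} {L : List (α × Bool)}
    (h : IsReduced (x :: y :: L)) : x ≠ invLetter y := by
  rintro rfl
  simpa [invLetter] using (isReduced_cons_cons.mp h).1 rfl

def substLetter (σ : α → List (α × Bool)) (x : α × Bool) : List (α × Bool) :=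
  if x.2 then σ x.1 else invRev (σ x.1)

def substHom (σ : α → List (α × Bool)) : FreeGroup α →* FreeGroup α :=
  lift fun i => mk (σ i)

lemma substHom_of (σ : α → List (α × Bool)) (i : α) : substHom σ (of i) = mk (σ i) :=
  lift_apply_of

lemma substHom_mk_singleton (σ : α → List (α × Bool)) (x : α × Bool) :
    substHom σ (mk [x]) = mk (substLetter σ x) := by
  obtain ⟨i, _ | _⟩ := x
  · rw [show mk [(i, false)] = (of i)⁻¹ from rfl, _root_.map_inv, substHom_of, inv_mk]
    rfl
  · exact substHom_of σ i

variable (σ : α → List (α × Bool)) (P : α × Bool → List (List (α × Bool)))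

/-- Left multiplication by the image of a letter other than `y⁻¹` cannot cancel all of `p`:
at most one letter cancels at a junction (see `appendCancel`), so only single letters need
checking. -/
def IsStablePattern (y : α × Bool) (p : List (α × Bool)) : Prop :=
  p ≠ [] ∧ (p.length = 1 →
    ∀ z, z ≠ invLetter y → (substLetter σ z).getLast? ≠ p.head?.map invLetter)

def HasStablePrefix (y : α × Bool) (v : List (α × Bool)) : Prop :=
  ∃ p ∈ P y, IsStablePattern σ y p ∧ p <+: v

/-- The invariant satisfied by `v`, the reduced image of a reduced word beginning with `y`:
`P y` lists the possible such images up to a stable prefix. -/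
def FitsPattern (y : α × Bool) (v : List (α × Bool)) : Prop :=
  IsReduced v ∧ (v ∈ P y ∨ HasStablePrefix σ P y v)

variable {σ P}

lemma FitsPattern.head? {c : α × Bool} (hc : ∀ p ∈ P c, p.head? = some c) {v : List (α × Bool)}
    (hv : FitsPattern σ P c v) : v.head? = some c := by
  obtain ⟨-, hv | ⟨p, hp, hstable, t, rfl⟩⟩ := hv
  · exact hc v hv
  · obtain ⟨h, p, rfl⟩ := List.exists_cons_of_ne_nil hstable.1
    simpa using hc _ hp

end

variable {α : Type*} [DecidableEq α]

def StartsWith (c : α × Bool) (g : FreeGroup α) : Prop := g.toWord.head? = some c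

def appendCancel (u : List (α × Bool)) : List (α × Bool) → List (α × Bool)
  | [] => u
  | h :: t => if u.getLast? = some (invLetter h) then u.dropLast ++ t else u ++ h :: t

lemma appendCancel_cons (u : List (α × Bool)) (h : α × Bool) (t : List (α × Bool)) :
    appendCancel u (h :: t) =
      if u.getLast? = some (invLetter h) then u.dropLast ++ t else u ++ h :: t :=
  rfl

lemma appendCancel_append {p : List (α × Bool)} (hp : p ≠ []) (u t : List (α × Bool)) :
    appendCancel u (p ++ t) = appendCancel u p ++ t := by
  obtain ⟨h, p, rfl⟩ := List.exists_cons_of_ne_nil hp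
  simp only [List.cons_append, appendCancel_cons]
  split_ifs <;> simp

lemma mk_appendCancel (u v : List (α × Bool)) :
    mk (appendCancel u v) = mk u * mk v := by
  rcases v with _ | ⟨h, t⟩
  · rw [appendCancel, ← one_eq_mk, mul_one]
  rw [appendCancel_cons, mul_mk]
  split_ifs with hc
  · have hu : u = u.dropLast ++ [invLetter h] := (List.dropLast_append_getLast? _ hc).symm
    calc mk (u.dropLast ++ t)
        = mk (u.dropLast ++ (h.1, !h.2) :: (h.1, h.2) :: t) :=
          (Quot.sound Red.Step.not_rev).symm
      _ = mk (u ++ h :: t) := by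
          conv_rhs => rw [hu]
          simp [invLetter]
  · rfl

lemma IsReduced.appendCancel_append {u p t : List (α × Bool)}
    (hq : IsReduced (appendCancel u p)) (hpt : IsReduced (p ++ t)) (hp : p ≠ [])
    (hcancel : p.length = 1 → u.getLast? ≠ p.head?.map invLetter) :
    IsReduced (appendCancel u p ++ t) := by
  obtain ⟨h, p, rfl⟩ := List.exists_cons_of_ne_nil hp
  rw [appendCancel_cons] at hq ⊢
  split_ifs at hq ⊢ with hc
  · have hp : p ≠ [] := by
      rintro rfl
      exact hcancel rfl hc
    exact hq.append_overlap (List.IsChain.tail hpt) hp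
  · simpa using hq.append_overlap hpt (List.cons_ne_nil _ _)

/-- The image of `L` under `substHom σ`, reduced letter by letter from the right; it is the
reduced word when no step needs more than one cancellation, as `IsPatternCertificate`
guarantees. -/
def substWord (σ : α → List (α × Bool)) (L : List (α × Bool)) : List (α × Bool) :=
  L.foldr (fun x v => appendCancel (substLetter σ x) v) []

lemma substHom_mk (σ : α → List (α × Bool)) (L : List (α × Bool)) :
    substHom σ (mk L) = mk (substWord σ L) := by
  induction L with
  | nil => rfl
  | cons x L ih =>
    rw [substWord, List.foldr_cons, ← substWord, mk_appendCancel, ← ih,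
      ← substHom_mk_singleton, ← _root_.map_mul, mul_mk, List.singleton_append]

def substMulEquiv (σ τ : α → List (α × Bool)) (hστ : ∀ i, substWord τ (σ i) = [(i, true)])
    (hτσ : ∀ i, substWord σ (τ i) = [(i, true)]) : MulAut (FreeGroup α) :=
  (substHom σ).toMulEquiv (substHom τ)
    (ext_hom _ _ fun i => by rw [MonoidHom.comp_apply, substHom_of, substHom_mk, hστ]; rfl)
    (ext_hom _ _ fun i => by rw [MonoidHom.comp_apply, substHom_of, substHom_mk, hτσ]; rfl)

variable (σ : α → List (α × Bool)) (P : α × Bool → List (List (α × Bool)))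

def IsPatternCertificate : Prop :=
  (∀ x, FitsPattern σ P x (substLetter σ x)) ∧
  ∀ y, ∀ p ∈ P y, ∀ x, x ≠ invLetter y →
    FitsPattern σ P x (appendCancel (substLetter σ x) p) ∧
    (IsStablePattern σ y p → HasStablePrefix σ P x (appendCancel (substLetter σ x) p))

instance [Fintype α] (y : α × Bool) : DecidablePred (IsStablePattern σ y) := fun _ => by
  unfold IsStablePattern; infer_instance

instance [Fintype α] (y : α × Bool) : DecidablePred (HasStablePrefix σ P y) := fun _ => by
  unfold HasStablePrefix; infer_instance

instance [Fintype α] (y : α × Bool) : DecidablePred (FitsPattern σ P y) := fun _ => by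
  unfold FitsPattern IsReduced; infer_instance

instance [Fintype α] : Decidable (IsPatternCertificate σ P) := by
  unfold IsPatternCertificate; infer_instance

variable {σ P}

lemma IsPatternCertificate.fitsPattern_appendCancel (hP : IsPatternCertificate σ P)
    {x y : α × Bool} {v : List (α × Bool)} (hxy : x ≠ invLetter y) (hv : FitsPattern σ P y v) :
    FitsPattern σ P x (appendCancel (substLetter σ x) v) := by
  obtain ⟨hred, hv | ⟨p, hp, hstable, t, rfl⟩⟩ := hv
  · exact (hP.2 y v hv x hxy).1
  obtain ⟨⟨hq, -⟩, hpre⟩ := hP.2 y p hp x hxy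
  obtain ⟨p', hp', hstable', hpre'⟩ := hpre hstable
  rw [appendCancel_append hstable.1]
  exact ⟨hq.appendCancel_append hred hstable.1 fun h1 => hstable.2 h1 x hxy,
    Or.inr ⟨p', hp', hstable', hpre'.trans (List.prefix_append _ _)⟩⟩

lemma IsPatternCertificate.fitsPattern_substWord (hP : IsPatternCertificate σ P)
    {x : α × Bool} {L : List (α × Bool)} (hL : IsReduced (x :: L)) :
    FitsPattern σ P x (substWord σ (x :: L)) := by
  induction L generalizing x with
  | nil => exact hP.1 x
  | cons y L ih =>
    exact hP.fitsPattern_appendCancel (ne_invLetter_of_isReduced hL) (ih (List.IsChain.tail hL))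

lemma IsPatternCertificate.startsWith_substHom (hP : IsPatternCertificate σ P) {c : α × Bool}
    (hc : ∀ p ∈ P c, p.head? = some c) {g : FreeGroup α} (hg : StartsWith c g) :
    StartsWith c (substHom σ g) := by
  obtain ⟨x, L, hxL⟩ : ∃ x L, g.toWord = x :: L :=
    List.exists_cons_of_ne_nil fun h => by rw [StartsWith, h] at hg; simp at hg
  obtain rfl : x = c := by simpa [StartsWith, hxL] using hg
  have hfit := hP.fitsPattern_substWord (hxL ▸ isReduced_toWord)
  rw [StartsWith, ← mk_toWord (x := g), substHom_mk, toWord_mk, hxL, hfit.1.reduce_eq]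
  exact hfit.head? hc

lemma IsPatternCertificate.startsWith_substHom_and_inv (hP : IsPatternCertificate σ P)
    {c : α × Bool} (hc : ∀ p ∈ P c, p.head? = some c) {x : FreeGroup α}
    (hx : StartsWith c x ∧ StartsWith c x⁻¹) :
    StartsWith c (substHom σ x) ∧ StartsWith c (substHom σ x)⁻¹ :=
  ⟨hP.startsWith_substHom hc hx.1,
    _root_.map_inv (substHom σ) x ▸ hP.startsWith_substHom hc hx.2⟩

end FreeGroup

/-! ### The Artin representation and Property A -/

namespace Braid3

open FreeGroup (of mk substHom substMulEquiv IsPatternCertificate StartsWith ext_hom substHom_of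
  substHom_mk lift_apply_of inv_mk toWord_inv toWord_of invRev)

/-- The images of the generators of `F₃` under the Artin automorphisms: σ1 acts on `x₁, x₂`
and σ2 on `x₀, x₁` (the Artin action with the strands numbered backwards), so that `x₀`
is fixed by σ1. -/
def artin₁ : Fin 3 → List (Fin 3 × Bool) :=
  ![[(0, true)], [(1, true), (2, true), (1, false)], [(1, true)]]

def artin₁Inv : Fin 3 → List (Fin 3 × Bool) :=
  ![[(0, true)], [(2, true)], [(2, false), (1, true), (2, true)]]

def artin₂ : Fin 3 → List (Fin 3 × Bool) :=
  ![[(0, true), (1, true), (0, false)], [(0, true)], [(2, true)]]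

def artin₂Inv : Fin 3 → List (Fin 3 × Bool) :=
  ![[(1, true)], [(1, false), (0, true), (1, true)], [(2, true)]]

def artinAut : Fin 2 → MulAut (FreeGroup (Fin 3)) :=
  ![substMulEquiv artin₁ artin₁Inv (by decide) (by decide),
    substMulEquiv artin₂ artin₂Inv (by decide) (by decide)]

lemma artinAut_braid :
    artinAut 0 * artinAut 1 * artinAut 0 = artinAut 1 * artinAut 0 * artinAut 1 := by
  refine MulEquiv.toMonoidHom_injective (ext_hom _ _ fun i => ?_)
  show substHom artin₁ (substHom artin₂ (substHom artin₁ (of i))) =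
    substHom artin₂ (substHom artin₁ (substHom artin₂ (of i)))
  simp only [substHom_of, substHom_mk]
  fin_cases i <;> rfl

def artinRep : B3 →* MulAut (FreeGroup (Fin 3)) :=
  PresentedGroup.toGroup (f := artinAut) <| by
    rintro _ rfl
    simp only [map_mul, map_inv, lift_apply_of, mul_inv_eq_one]
    exact artinAut_braid

lemma artinRep_g (i : Fin 2) : artinRep (g i) = artinAut i :=
  PresentedGroup.toGroup.of _

def artinPattern₁ : Fin 3 × Bool → List (List (Fin 3 × Bool)) := fun y =>
  (if y.2 then
    ![[[(0, true)]],
      [[(1, true), (2, true)]],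
      [[(1, true)], [(1, true), (0, true)], [(1, true), (0, false)], [(1, true), (1, true)]]]
  else
    ![[[(0, false)]],
      [[(1, true), (2, false)]],
      [[(1, false)], [(2, true)], [(2, false)]]]) y.1

def artinPattern₁Inv : Fin 3 × Bool → List (List (Fin 3 × Bool)) := fun y =>
  (if y.2 then
    ![[[(0, true)]],
      [[(2, true)], [(1, true)], [(1, false)]],
      [[(2, false), (1, true)]]]
  else
    ![[[(0, false)]],
      [[(2, false)], [(2, false), (0, true)], [(2, false), (0, false)], [(2, false), (2, false)]],
      [[(2, false), (1, false)]]]) y.1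

def artinPattern₂ : Fin 3 × Bool → List (List (Fin 3 × Bool)) := fun y =>
  (if y.2 then
    ![[[(0, true), (1, true)]],
      [[(0, true)], [(0, true), (0, true)], [(0, true), (2, true)], [(0, true), (2, false)]],
      [[(2, true)]]]
  else
    ![[[(0, true), (1, false)]],
      [[(0, false)], [(1, true)], [(1, false)]],
      [[(2, false)]]]) y.1

lemma isPatternCertificate_artin₁ : IsPatternCertificate artin₁ artinPattern₁ := by decide

lemma isPatternCertificate_artin₁Inv : IsPatternCertificate artin₁Inv artinPattern₁Inv := by
  decide

lemma isPatternCertificate_artin₂ : IsPatternCertificate artin₂ artinPattern₂ := by decide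

def evalLetter (l : Fin 2 × Bool) : B3 := if l.2 then g l.1 else (g l.1)⁻¹

lemma evalSW_cons (l : Fin 2 × Bool) (w : List (Fin 2 × Bool)) :
    evalSW (l :: w) = evalLetter l * evalSW w :=
  List.prod_cons

lemma artinRep_evalLetter_of_zero {l : Fin 2 × Bool} (hl : l.1 = 0) :
    artinRep (evalLetter l) (of 0) = of 0 := by
  obtain ⟨i, _ | _⟩ := l
  all_goals
    obtain rfl : i = 0 := hl
    simp only [evalLetter, if_true, if_false, Bool.false_eq_true, map_inv, artinRep_g]
    rfl

lemma artinRep_evalSW_of_zero {w : List (Fin 2 × Bool)} (hw : ∀ l ∈ w, l.1 = 0) :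
    artinRep (evalSW w) (of 0) = of 0 := by
  induction w with
  | nil => rfl
  | cons l w ih =>
    rw [evalSW_cons, map_mul, MulAut.mul_apply, ih fun l hl => hw l (List.mem_cons_of_mem _ hl),
      artinRep_evalLetter_of_zero (hw l List.mem_cons_self)]

lemma startsWith_artinRep_evalSW {w : List (Fin 2 × Bool)} (hpos : (1, true) ∈ w)
    (hneg : (1, false) ∉ w) :
    StartsWith (0, true) (artinRep (evalSW w) (of 0)) ∧
      StartsWith (0, true) (artinRep (evalSW w) (of 0))⁻¹ := by
  induction w with
  | nil => simp at hpos
  | cons l w ih =>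
    rw [evalSW_cons, map_mul, MulAut.mul_apply]
    have hneg' : (1, false) ∉ w := fun h => hneg (List.mem_cons_of_mem _ h)
    by_cases hw : (1, true) ∈ w
    · obtain ⟨i, _ | _⟩ := l
      all_goals fin_cases i
      · exact isPatternCertificate_artin₁Inv.startsWith_substHom_and_inv (by decide) (ih hw hneg')
      · simp at hneg
      · exact isPatternCertificate_artin₁.startsWith_substHom_and_inv (by decide) (ih hw hneg')
      · exact isPatternCertificate_artin₂.startsWith_substHom_and_inv (by decide) (ih hw hneg')
    · obtain rfl : l = (1, true) := by simpa [hw, eq_comm] using hpos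
      have hzero : ∀ l ∈ w, l.1 = 0 := by
        rintro ⟨i, b⟩ hl
        fin_cases i
        · rfl
        · cases b <;> simp_all
      rw [artinRep_evalSW_of_zero hzero]
      show StartsWith _ (substHom artin₂ (of 0)) ∧ StartsWith _ (substHom artin₂ (of 0))⁻¹
      rw [substHom_of, inv_mk]
      exact ⟨rfl, rfl⟩

def exponentSum : B3 →* Multiplicative ℤ :=
  PresentedGroup.toGroup (f := fun _ => Multiplicative.ofAdd 1) <| by
    rintro _ rfl
    simp only [map_mul, map_inv, lift_apply_of]
    group

lemma exponentSum_g (i : Fin 2) : exponentSum (g i) = Multiplicative.ofAdd 1 :=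
  PresentedGroup.toGroup.of _

lemma evalSW_eq_pow {w : List (Fin 2 × Bool)} (hw : ∀ l ∈ w, l = (0, true)) :
    evalSW w = g 0 ^ w.length := by
  obtain ⟨n, rfl⟩ : ∃ n, w = List.replicate n (0, true) :=
    ⟨_, List.eq_replicate_iff.mpr ⟨rfl, hw⟩⟩
  simp [evalSW, List.map_replicate, List.prod_replicate]

/-- Dehornoy's Property A. -/
theorem evalSW_ne_one_of_sigmaPos {w : List (Fin 2 × Bool)} (hw : SigmaPos w) : evalSW w ≠ 1 := by
  obtain ⟨i, hpos, hneg, hle⟩ := hw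
  intro h1
  fin_cases i
  · have hw : ∀ l ∈ w, l = (0, true) := by
      rintro ⟨j, b⟩ hl
      obtain rfl : j = 0 := Fin.le_zero_iff.mp (hle _ hl)
      cases b
      · exact absurd hl hneg
      · rfl
    have hnil : w = [] := by simpa [evalSW_eq_pow hw, exponentSum_g] using congrArg exponentSum h1
    simp [hnil] at hpos
  · have := (startsWith_artinRep_evalSW hpos hneg).2
    rw [h1, map_one, MulAut.one_apply, StartsWith, toWord_inv, toWord_of] at this
    simp [invRev] at this

lemma sigmaPos_append {w₁ w₂ : List (Fin 2 × Bool)} (h₁ : SigmaPos w₁) (h₂ : SigmaPos w₂) :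
    SigmaPos (w₁ ++ w₂) := by
  obtain ⟨i, hpos₁, hneg₁, hle₁⟩ := h₁
  obtain ⟨j, hpos₂, hneg₂, hle₂⟩ := h₂
  simp only [SigmaPos, List.mem_append, not_or, or_imp, forall_and]
  rcases le_total i j with hij | hji
  · refine ⟨j, Or.inr hpos₂, ⟨fun h => hneg₁ ?_, hneg₂⟩, fun l hl => (hle₁ l hl).trans hij, hle₂⟩
    rwa [le_antisymm hij (hle₁ _ h)]
  · refine ⟨i, Or.inl hpos₁, ⟨hneg₁, fun h => hneg₂ ?_⟩, hle₁, fun l hl => (hle₂ l hl).trans hji⟩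
    rwa [le_antisymm hji (hle₂ _ h)]

lemma gLt_trans {a b c : B3} (hab : gLt a b) (hbc : gLt b c) : gLt a c := by
  obtain ⟨w₁, hw₁, he₁⟩ := hab
  obtain ⟨w₂, hw₂, he₂⟩ := hbc
  refine ⟨w₁ ++ w₂, sigmaPos_append hw₁ hw₂, ?_⟩
  rw [evalSW, List.map_append, List.prod_append, ← evalSW, ← evalSW, he₁, he₂]
  group

lemma gLt_irrefl (a : B3) : ¬ gLt a a := by
  rintro ⟨w, hw, he⟩
  exact evalSW_ne_one_of_sigmaPos hw (he.trans (inv_mul_cancel a))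

instance : IsTrans B3P blt := ⟨fun _ _ _ => gLt_trans⟩

instance : Std.Irrefl blt := ⟨fun a => gLt_irrefl (ι a)⟩

/-! ### Garside complexity and word length -/

lemma mkw_append (u v : List (Fin 2)) : mkw (u ++ v) = mkw u * mkw v := by
  rw [mkw, mkw, mkw, ← map_mul]
  rfl

lemma mkw_cons (i : Fin 2) (w : List (Fin 2)) : mkw (i :: w) = mkw [i] * mkw w :=
  mkw_append [i] w

lemma mkw_surjective : Function.Surjective mkw := fun b => by
  obtain ⟨x, rfl⟩ := Con.mk'_surjective (c := braidCon) b
  exact ⟨x.toList, congrArg braidCon.mk' (FreeMonoid.ofList_toList x)⟩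

lemma mkw_braid : mkw [0, 1, 0] = mkw [1, 0, 1] :=
  (Con.eq _).mpr (ConGen.Rel.of _ _ ⟨rfl, rfl⟩)

lemma mkw_singleton_mul_Δ (i : Fin 2) : mkw [i] * Δ = Δ * mkw [i.rev] := by
  fin_cases i
  · calc mkw [0] * mkw [0, 1, 0] = mkw [0] * mkw [1, 0, 1] := by rw [mkw_braid]
      _ = mkw [0, 1, 0] * mkw [1] := by rw [← mkw_append, ← mkw_append]; rfl
  · calc mkw [1] * mkw [0, 1, 0] = mkw [1, 0, 1] * mkw [0] := by
          rw [← mkw_append, ← mkw_append]; rfl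
      _ = mkw [0, 1, 0] * mkw [0] := by rw [mkw_braid]

lemma mkw_singleton_dvd_Δ (i : Fin 2) : mkw [i] ∣ Δ := by
  fin_cases i
  · exact ⟨mkw [1, 0], mkw_append [0] [1, 0]⟩
  · exact ⟨mkw [0, 1], mkw_braid.trans (mkw_append [1] [0, 1])⟩

lemma mkw_singleton_mul_Δ_pow_dvd (i : Fin 2) (n : ℕ) : mkw [i] * Δ ^ n ∣ Δ ^ (n + 1) := by
  induction n generalizing i with
  | zero => simpa using mkw_singleton_dvd_Δ i
  | succ n ih =>
    rw [pow_succ' Δ n, ← mul_assoc, mkw_singleton_mul_Δ, mul_assoc, pow_succ' Δ (n + 1)]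
    exact mul_dvd_mul_left Δ (ih i.rev)

lemma mkw_dvd_Δ_pow_length (w : List (Fin 2)) : mkw w ∣ Δ ^ w.length := by
  induction w with
  | nil => exact ⟨1, rfl⟩
  | cons i w ih =>
    rw [mkw_cons, List.length_cons]
    exact (mul_dvd_mul_left _ ih).trans (mkw_singleton_mul_Δ_pow_dvd i _)

def lengthHom : B3P →* Multiplicative ℕ :=
  Con.lift _ (FreeMonoid.lift fun _ => Multiplicative.ofAdd 1) <| Con.conGen_le.mpr <| by
    rintro _ _ ⟨rfl, rfl⟩
    rfl

lemma lengthHom_mkw (w : List (Fin 2)) : lengthHom (mkw w) = Multiplicative.ofAdd w.length := by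
  induction w with
  | nil => rfl
  | cons i w ih =>
    rw [mkw_cons, map_mul, ih, List.length_cons, add_comm, ofAdd_add]
    rfl

lemma length_le_of_mkw_dvd_Δ_pow {w : List (Fin 2)} {ℓ : ℕ} (h : mkw w ∣ Δ ^ ℓ) :
    w.length ≤ 3 * ℓ := by
  obtain ⟨c, hc⟩ := h
  obtain ⟨v, rfl⟩ := mkw_surjective c
  have := congrArg (Multiplicative.toAdd ∘ lengthHom) hc
  simp only [Function.comp_apply, map_pow, Δ, ← mkw_append, lengthHom_mkw, toAdd_pow,
    toAdd_ofAdd, List.length_append, List.length_cons, List.length_nil, smul_eq_mul] at this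
  omega

lemma length_le_three_mul_compl (w : List (Fin 2)) : w.length ≤ 3 * compl (mkw w) := by
  obtain ⟨c, hc⟩ := mkw_dvd_Δ_pow_length w
  have hmem : compl (mkw w) ∈ {ℓ | ∃ c, mkw w * c = Δ ^ ℓ} := Nat.sInf_mem ⟨_, c, hc.symm⟩
  obtain ⟨c, hc⟩ := hmem
  exact length_le_of_mkw_dvd_Δ_pow ⟨c, hc.symm⟩

/-- A strictly descending sequence in B₃⁺ whose entries all have complexity at most k
has length less than 2^{3k+1}. -/
theorem descending_bounded_complexity (k m : ℕ) (bs : ℕ → B3P)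
    (hdesc : ∀ t, t < m → blt (bs (t + 1)) (bs t))
    (hcompl : ∀ t, t ≤ m → compl (bs t) ≤ k) :
    m < 2 ^ (3 * k + 1) := by
  have hinj : Set.InjOn bs (Set.Iic m) := Set.injOn_Iic_of_forall_rel_succ blt hdesc
  choose w hw using fun t => mkw_surjective (bs t)
  have hlen (t) (ht : t ∈ Finset.Iic m) : (w t).length ≤ 3 * k :=
    calc (w t).length ≤ 3 * compl (bs t) := hw t ▸ length_le_three_mul_compl (w t)
      _ ≤ 3 * k := Nat.mul_le_mul_left 3 (hcompl t (Finset.mem_Iic.mp ht))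
  have hwinj : Set.InjOn w (Finset.Iic m) := fun s hs t ht hst =>
    hinj (Finset.mem_Iic.mp hs) (Finset.mem_Iic.mp ht) (by rw [← hw s, ← hw t, hst])
  have hcard := Finset.card_le_two_pow_of_injOn _ w hwinj hlen
  rw [Nat.card_Iic] at hcard
  omega

end Braid3
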